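/- Let R be a commutative ring and let G be a nonzero indecomposable injective R-module. Then there exists a maximal ideal P of R such that every element of R \ P acts bijectively on G; in particular, the R-module structure on G extends to an R_P-module structure. -/

import Mathlib

universe u

/-- A ring is *coherent* if every finitely generated ideal is finitely presented. -/
def IsCoherentRing (R : Type u) [CommRing R] : Prop :=
  ∀ I : Ideal R, I.FG → Module.FinitePresentation R I

/-- A ring is *semicoherent* if `Hom_R(E, F)` is (isomorphic to) a submodule of a flat module
for every pair of injective modules `E`, `F`. -/
def IsSemicoherentRing (R : Type u) [CommRing R] : Prop :=
  ∀ (E F : Type u) [AddCommGroup E] [Module R E] [AddCommGroup F] [Module R F],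
    Module.Injective R E → Module.Injective R F →
      ∃ G : ModuleCat.{u} R, Module.Flat R G ∧
        ∃ i : (E →ₗ[R] F) →ₗ[R] G, Function.Injective i

/-- An `R`-module `E` is *FP-injective* if `Ext¹_R(F, E) = 0` for every finitely
presented `R`-module `F`. -/
def IsFPInjective (R : Type u) [CommRing R] (E : Type u) [AddCommGroup E] [Module R E] : Prop :=
  ∀ (F : Type u) [AddCommGroup F] [Module R F], Module.FinitePresentation R F →
    Subsingleton (((Ext R (ModuleCat.{u} R) 1).obj
      (Opposite.op (ModuleCat.of R F))).obj (ModuleCat.of R E))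

/-- A ring is an *IF-ring* if every injective module over it is flat. -/
def IsIFRing (R : Type u) [CommRing R] : Prop :=
  ∀ (M : Type u) [AddCommGroup M] [Module R M], Module.Injective R M → Module.Flat R M

/-- `f : M →ₗ[R] E` exhibits `E` as an injective hull of `M`: `E` is injective and
`f` embeds `M` as an essential submodule of `E`. -/
def IsInjectiveHull (R : Type u) [CommRing R] (M E : Type u) [AddCommGroup M] [Module R M]
    [AddCommGroup E] [Module R E] (f : M →ₗ[R] E) : Prop :=
  Module.Injective R E ∧ Function.Injective f ∧
    ∀ N : Submodule R E, N ≠ ⊥ → N ⊓ LinearMap.range f ≠ ⊥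

/-- A module is indecomposable if it is nonzero and not the direct sum
of two nonzero submodules. -/
def IsIndecomposableModule (R : Type u) [CommRing R] (M : Type u) [AddCommGroup M]
    [Module R M] : Prop :=
  Nontrivial M ∧ ∀ A B : Submodule R M, IsCompl A B → A = ⊥ ∨ B = ⊥

/-- A module has *finite Goldie dimension* if its injective hull is a finite direct
sum of indecomposable injective modules. -/
def HasFiniteGoldieDimension (R : Type u) [CommRing R] (M : Type u) [AddCommGroup M]
    [Module R M] : Prop :=
  ∃ (E : ModuleCat.{u} R) (f : M →ₗ[R] E), IsInjectiveHull R M E f ∧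
    ∃ (n : ℕ) (D : Fin n → Submodule R E), DirectSum.IsInternal D ∧
      ∀ i, Module.Injective R (D i) ∧ IsIndecomposableModule R (D i)

/-- A commutative ring is a *valuation ring* (uniserial) if its ideals are totally
ordered by inclusion. -/
def IsChainRing (R : Type u) [CommRing R] : Prop :=
  ∀ I J : Ideal R, I ≤ J ∨ J ≤ I

/-- A commutative ring is *arithmetical* if all its localizations at maximal ideals are
valuation rings. -/
def IsArithmetical (R : Type u) [CommRing R] : Prop :=
  ∀ (P : Ideal R) (hP : P.IsMaximal),
    haveI := hP.isPrime
    IsChainRing (Localization.AtPrime P)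

/-- An `R`-module `M` is *finitely injective* if every homomorphism `A → M` from a finitely
generated submodule `A` of an arbitrary module `B` extends to `B`. -/
def IsFinitelyInjective (R : Type u) [CommRing R] (M : Type u) [AddCommGroup M]
    [Module R M] : Prop :=
  ∀ (B : Type u) [AddCommGroup B] [Module R B] (A : Submodule R B), A.FG →
    ∀ f : A →ₗ[R] M, ∃ g : B →ₗ[R] M, ∀ a : A, g a = f a

/-- A domain has *finite character* if every nonzero element lies in only finitely many
maximal ideals. -/
def FiniteCharacter (R : Type u) [CommRing R] : Prop :=
  ∀ r : R, r ≠ 0 → {P : Ideal R | P.IsMaximal ∧ r ∈ P}.Finite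

/-!
In an injective module every complement (a submodule maximal among those meeting a given one
trivially) is a direct summand, so an indecomposable injective module `G` is uniform: any two
nonzero submodules meet. Hence the annihilators of the nonzero elements of `G` form a directed
family of proper ideals; their union is a proper ideal, contained in a maximal ideal `P`. Every
`r ∉ P` acts injectively, and an injective endomorphism of `G` is onto because its image is again
injective, hence a direct summand.
-/

open Submodule LinearMap

theorem exists_le_maximal_disjoint {α : Type*} [CompleteLattice α] [IsCompactlyGenerated α]
    {a b : α} (h : Disjoint a b) : ∃ c, a ≤ c ∧ Maximal (Disjoint · b) c :=
  zorn_le_nonempty₀ {c | Disjoint c b}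
    (fun _ hc hchain _ _ => ⟨_, hchain.directedOn.disjoint_sSup_left.2 hc, fun _ => le_sSup⟩) a h

theorem Ideal.torsionOf_le_of_mem_span_singleton {R M : Type*} [CommRing R] [AddCommGroup M]
    [Module R M] {x z : M} (h : z ∈ R ∙ x) : torsionOf R M x ≤ torsionOf R M z := by
  obtain ⟨a, rfl⟩ := Submodule.mem_span_singleton.1 h
  intro r hr
  rw [mem_torsionOf_iff] at hr ⊢
  rw [smul_comm, hr, smul_zero]

theorem directed_torsionOf_of_eq_bot_or_eq_bot {R M : Type*} [CommRing R] [AddCommGroup M]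
    [Module R M] (huniform : ∀ A B : Submodule R M, Disjoint A B → A = ⊥ ∨ B = ⊥) :
    Directed (· ≤ ·) fun x : {x : M // x ≠ 0} => Ideal.torsionOf R M x := by
  intro x y
  have hxy : (R ∙ (x : M)) ⊓ (R ∙ (y : M)) ≠ ⊥ := fun h =>
    (huniform _ _ (disjoint_iff.2 h)).elim (x.2 <| span_singleton_eq_bot.1 ·)
      (y.2 <| span_singleton_eq_bot.1 ·)
  obtain ⟨z, ⟨hzx, hzy⟩, hz0⟩ := exists_mem_ne_zero_of_ne_bot hxy
  exact ⟨⟨z, hz0⟩, Ideal.torsionOf_le_of_mem_span_singleton hzx,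
    Ideal.torsionOf_le_of_mem_span_singleton hzy⟩

section IndecomposableInjective

variable {R : Type*} [Ring R] {G : Type u} [AddCommGroup G] [Module R G]

theorem Submodule.eq_bot_of_disjoint_map_mkQ {C D : Submodule R G}
    (hD : Maximal (Disjoint · C) D) {V : Submodule R (G ⧸ D)}
    (hV : Disjoint (C.map D.mkQ) V) : V = ⊥ := by
  have hW : Disjoint (V.comap D.mkQ) C := by
    refine disjoint_def.2 fun x hxV hxC => disjoint_def.1 hD.1 x ?_ hxC
    rw [← ker_mkQ D, mem_ker]
    exact disjoint_def.1 hV _ (mem_map_of_mem hxC) hxV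
  rw [← le_bot_iff, ← comap_le_comap_iff_of_surjective D.mkQ_surjective, comap_bot, ker_mkQ]
  exact hD.2 hW (D.le_comap_mkQ V)

theorem Module.Injective.exists_isCompl_of_maximal_disjoint (hG : Module.Injective R G)
    {B C : Submodule R G} (hC : Maximal (Disjoint · B) C) : ∃ K, IsCompl C K := by
  obtain ⟨D, -, hD⟩ := exists_le_maximal_disjoint (disjoint_bot_left : Disjoint ⊥ C)
  have hι : Function.Injective (D.mkQ ∘ₗ C.subtype) := by
    rw [← ker_eq_bot, ker_comp, ker_mkQ, ← disjoint_iff_comap_eq_bot]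
    exact hD.1.symm
  -- `C` is essential in `G ⧸ D`, so the extension `τ` of `C ↪ G` to `G ⧸ D` is injective and its
  -- range is an essential extension of `C` still disjoint from `B`, i.e. `C` itself.
  obtain ⟨τ, hτ⟩ := hG.out _ hι C.subtype
  have hpull : ∀ X : Submodule R G, Disjoint C X → X.comap τ = ⊥ := fun X hX =>
    eq_bot_of_disjoint_map_mkQ hD <| disjoint_def.2 <| by
      rintro _ ⟨c, hc, rfl⟩ hcX
      have : c = 0 := disjoint_def.1 hX c hc ((show τ (D.mkQ c) = c from hτ ⟨c, hc⟩) ▸ hcX)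
      simp [this]
  have hCτ : C ≤ range τ := fun c hc => ⟨D.mkQ c, hτ ⟨c, hc⟩⟩
  have hτB : Disjoint (range τ) B := by
    rw [disjoint_iff, ← map_comap_eq, hpull B hC.1, Submodule.map_bot]
  have hrange : range τ = C := (hC.2 hτB hCτ).antisymm hCτ
  let p : G →ₗ[R] C := (τ ∘ₗ D.mkQ).codRestrict C fun x => hrange ▸ mem_range_self τ _
  exact ⟨ker p, isCompl_of_proj fun c => Subtype.ext (hτ c)⟩

theorem Module.Injective.eq_bot_or_eq_bot_of_disjoint (hG : Module.Injective R G)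
    (hind : ∀ A B : Submodule R G, IsCompl A B → A = ⊥ ∨ B = ⊥)
    {A B : Submodule R G} (hAB : Disjoint A B) : A = ⊥ ∨ B = ⊥ := by
  obtain ⟨C, hAC, hC⟩ := exists_le_maximal_disjoint hAB
  obtain ⟨K, hCK⟩ := hG.exists_isCompl_of_maximal_disjoint hC
  refine (hind C K hCK).imp (fun h => le_bot_iff.1 (hAC.trans h.le)) fun h => ?_
  rw [← top_disjoint, ← eq_top_of_isCompl_bot (h ▸ hCK)]
  exact hC.1

theorem Module.Injective.exists_isCompl_range {Q : Type u} [AddCommGroup Q] [Module R Q]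
    (hQ : Module.Injective R Q) {f : Q →ₗ[R] G} (hf : Function.Injective f) :
    ∃ K, IsCompl (range f) K := by
  obtain ⟨g, hg⟩ := hQ.out f hf LinearMap.id
  exact ⟨_, isCompl_of_proj (f := f.rangeRestrict ∘ₗ g) fun ⟨_, x, rfl⟩ =>
    Subtype.ext (by simp [hg])⟩

theorem Module.Injective.surjective_of_injective (hG : Module.Injective R G)
    (hind : ∀ A B : Submodule R G, IsCompl A B → A = ⊥ ∨ B = ⊥)
    {f : G →ₗ[R] G} (hf : Function.Injective f) : Function.Surjective f := by
  obtain ⟨K, hK⟩ := hG.exists_isCompl_range hf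
  rcases hind _ K hK with h | h
  · intro y
    refine ⟨0, ?_⟩
    rw [map_zero]
    exact (hf (by simp [range_eq_bot.1 h])).symm
  · exact range_eq_top.1 (eq_top_of_isCompl_bot (h ▸ hK))

end IndecomposableInjective

/-- If `G` is a nonzero indecomposable injective module over a commutative
ring `R`, then there is a maximal ideal `P` of `R` such that every element of `R \\ P` acts
bijectively on `G`; in particular the module structure of `G` extends to `R_P`. -/
theorem exists_maximalIdeal_smul_bijective_of_indecomposable_injective (R : Type u)
    [CommRing R] (G : Type u) [AddCommGroup G] [Module R G]
    (hG : Module.Injective R G) (hne : Nontrivial G)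
    (hind : ∀ A B : Submodule R G, IsCompl A B → A = ⊥ ∨ B = ⊥) :
    ∃ P : Ideal R, P.IsMaximal ∧ ∀ r ∉ P, Function.Bijective fun x : G => r • x := by
  have : Nonempty {x : G // x ≠ 0} := nonempty_subtype.2 (exists_ne 0)
  have hdir := directed_torsionOf_of_eq_bot_or_eq_bot fun _ _ =>
    hG.eq_bot_or_eq_bot_of_disjoint hind
  obtain ⟨P, hP, hle⟩ :=
    Ideal.exists_le_maximal (⨆ x : {x : G // x ≠ 0}, Ideal.torsionOf R G x) <| by
      rw [Ne, Ideal.eq_top_iff_one, mem_iSup_of_directed _ hdir]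
      rintro ⟨x, hx⟩
      exact x.2 (by simpa using hx)
  refine ⟨P, hP, fun r hr => ?_⟩
  have hinj : Function.Injective (lsmul R G r) := by
    refine ker_eq_bot.1 (Submodule.eq_bot_iff _ |>.2 fun x hx => ?_)
    by_contra hx0
    exact hr (hle (mem_iSup_of_mem ⟨x, hx0⟩ ((Ideal.mem_torsionOf_iff _ _).2 hx)))
  exact ⟨hinj, hG.surjective_of_injective hind hinj⟩
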